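/- arXiv:1906.03700 — 4 statements merged into one kernel-verified Lean document; each statement's English description precedes it below -/
import Mathlib

section
/- Let X be a set and c : X → X → ℝ a cost function satisfying, for all x, y ∈ X: c(x,y) ≥ 0, c(x,y) = c(y,x), and c(x,y) = 0 if and only if x = y. Fix an integer k ≥ 1 and let d_U be the induced discrepancy on weighted k-tuples. If d_U((x,π),(y,ρ)) = 0, then there exists a permutation σ of Fin k such that y (σ i) = x i and ρ (σ i) = π i for all i. -/
open scoped BigOperators

/-- The approximate Wasserstein discrepancy between two weighted `k`-tuples:
the minimum over permutations `σ` of `Fin k` of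
`(1/k) · ∑ i, c (x i) (y (σ i)) + arccos (∑ i, √(w₁ i · w₂ (σ i)))`. -/
noncomputable def dU {X : Type*} (c : X → X → ℝ) {k : ℕ}
    (x : Fin k → X) (w₁ : Fin k → ℝ) (y : Fin k → X) (w₂ : Fin k → ℝ) : ℝ :=
  Finset.univ.inf' Finset.univ_nonempty fun σ : Equiv.Perm (Fin k) =>
    (1 / (k : ℝ)) * ∑ i, c (x i) (y (σ i)) +
      Real.arccos (∑ i, Real.sqrt (w₁ i * w₂ (σ i)))

/-- **Identity of indiscernibles for the approximate Wasserstein distance**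
(Theorem 1): if the cost `c` is nonnegative, symmetric, and vanishes exactly on the
diagonal, then `d_U((x,w₁),(y,w₂)) = 0` implies that the two weighted `k`-tuples
coincide up to a permutation. -/
theorem eq_of_dU_eq_zero {X : Type*} (c : X → X → ℝ)
    (hc_nonneg : ∀ x y, 0 ≤ c x y)
    (hc_symm : ∀ x y, c x y = c y x)
    (hc_eq : ∀ x y, c x y = 0 ↔ x = y)
    (k : ℕ) (hk : 1 ≤ k)
    (x y : Fin k → X) (w₁ w₂ : Fin k → ℝ)
    (hw₁ : ∀ i, 0 ≤ w₁ i) (hw₁s : ∑ i, w₁ i = 1)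
    (hw₂ : ∀ i, 0 ≤ w₂ i) (hw₂s : ∑ i, w₂ i = 1)
    (h0 : dU c x w₁ y w₂ = 0) :
    ∃ σ : Equiv.Perm (Fin k), (∀ i, y (σ i) = x i) ∧ ∀ i, w₂ (σ i) = w₁ i := by
  obtain ⟨σ, -, hσ⟩ := Finset.exists_mem_eq_inf' (Finset.univ_nonempty)
    (fun σ : Equiv.Perm (Fin k) =>
      (1 / (k : ℝ)) * ∑ i, c (x i) (y (σ i)) +
        Real.arccos (∑ i, Real.sqrt (w₁ i * w₂ (σ i))))
  rw [dU, hσ] at h0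
  have hkpos : (0 : ℝ) < k := by exact_mod_cast hk
  have h1 : 0 ≤ (1 / (k : ℝ)) * ∑ i, c (x i) (y (σ i)) := by
    apply mul_nonneg (by positivity)
    exact Finset.sum_nonneg fun i _ => hc_nonneg _ _
  have h2 : 0 ≤ Real.arccos (∑ i, Real.sqrt (w₁ i * w₂ (σ i))) := Real.arccos_nonneg _
  have hA : (1 / (k : ℝ)) * ∑ i, c (x i) (y (σ i)) = 0 := by linarith
  have hB : Real.arccos (∑ i, Real.sqrt (w₁ i * w₂ (σ i))) = 0 := by linarith
  have hsum : ∑ i, c (x i) (y (σ i)) = 0 := by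
    have : (1 / (k : ℝ)) ≠ 0 := by positivity
    exact (mul_eq_zero.mp hA).resolve_left this
  have hxy : ∀ i, y (σ i) = x i := by
    intro i
    have := (Finset.sum_eq_zero_iff_of_nonneg
      (fun i _ => hc_nonneg (x i) (y (σ i)))).mp hsum i (Finset.mem_univ i)
    exact ((hc_eq _ _).mp this).symm
  refine ⟨σ, hxy, ?_⟩
  have hge : 1 ≤ ∑ i, Real.sqrt (w₁ i * w₂ (σ i)) := Real.arccos_eq_zero.mp hB
  have hle : ∀ i ∈ Finset.univ,
      Real.sqrt (w₁ i * w₂ (σ i)) ≤ (w₁ i + w₂ (σ i)) / 2 := by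
    intro i _
    rw [Real.sqrt_mul (hw₁ i)]
    nlinarith [Real.sq_sqrt (hw₁ i), Real.sq_sqrt (hw₂ (σ i)),
      Real.sqrt_nonneg (w₁ i), Real.sqrt_nonneg (w₂ (σ i)),
      sq_nonneg (Real.sqrt (w₁ i) - Real.sqrt (w₂ (σ i)))]
  have hsum2 : ∑ i, (w₁ i + w₂ (σ i)) / 2 = 1 := by
    rw [← Finset.sum_div, Finset.sum_add_distrib, hw₁s,
      Equiv.sum_comp σ w₂, hw₂s]
    norm_num
  have heq : ∀ i ∈ Finset.univ,
      Real.sqrt (w₁ i * w₂ (σ i)) = (w₁ i + w₂ (σ i)) / 2 := by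
    have hsle : ∑ i, (w₁ i + w₂ (σ i)) / 2 ≤ ∑ i, Real.sqrt (w₁ i * w₂ (σ i)) := by
      rw [hsum2]; exact hge
    exact fun i hi => le_antisymm (hle i hi)
      (by
        by_contra hlt
        push_neg at hlt
        have hstrict : ∑ j, Real.sqrt (w₁ j * w₂ (σ j)) <
            ∑ j, (w₁ j + w₂ (σ j)) / 2 :=
          Finset.sum_lt_sum (fun j hj => hle j hj) ⟨i, hi, hlt⟩
        linarith)
  intro i
  have h := heq i (Finset.mem_univ i)
  rw [Real.sqrt_mul (hw₁ i)] at h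
  nlinarith [Real.sq_sqrt (hw₁ i), Real.sq_sqrt (hw₂ (σ i)),
    Real.sqrt_nonneg (w₁ i), Real.sqrt_nonneg (w₂ (σ i)),
    sq_nonneg (Real.sqrt (w₁ i) - Real.sqrt (w₂ (σ i)))]
end

section
/- Let X be a set and c : X → X → ℝ a cost function satisfying, for all x, y, z ∈ X: c(x,y) ≥ 0, c(x,x) = 0, c(x,y) = c(y,x), and c(x,z) ≤ c(x,y) + c(y,z). Fix an integer k ≥ 1 and let d_U be the induced discrepancy on weighted k-tuples. Then d_U satisfies the triangle inequality: for all weighted k-tuples (x,π), (y,ρ), (z,ν), d_U((x,π),(y,ρ)) ≤ d_U((x,π),(z,ν)) + d_U((z,ν),(y,ρ)). -/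
/-!
Compose an optimal matching `σ` of `x` with `z` and an optimal matching `τ` of `z` with `y`
into the matching `σ.trans τ` of `x` with `y`. Its cost part is bounded pointwise by the
triangle inequality of `c`. Its arccos part is the Bhattacharyya angle: for probability
vectors `p`, `q`, `arccos (∑ i, √(p i * q i))` is the angle between the unit vectors
`(√(p i))ᵢ` and `(√(q i))ᵢ`, so it obeys the triangle inequality for angles on the sphere.
-/

open scoped BigOperators RealInnerProductSpace

section Bhattacharyya

variable {ι : Type*} [Fintype ι]

noncomputable def sqrtVec (p : ι → ℝ) : EuclideanSpace ℝ ι :=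
  WithLp.toLp 2 fun i => √(p i)

lemma inner_sqrtVec {p : ι → ℝ} (hp : ∀ i, 0 ≤ p i) (q : ι → ℝ) :
    ⟪sqrtVec p, sqrtVec q⟫ = ∑ i, √(p i * q i) := by
  simp only [sqrtVec, PiLp.inner_apply, RCLike.inner_apply, conj_trivial]
  exact Finset.sum_congr rfl fun i _ => by rw [Real.sqrt_mul (hp i), mul_comm]

lemma norm_sqrtVec {p : ι → ℝ} (hp : ∀ i, 0 ≤ p i) (hp₁ : ∑ i, p i = 1) :
    ‖sqrtVec p‖ = 1 := by
  have h : ⟪sqrtVec p, sqrtVec p⟫ = 1 := by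
    simp only [inner_sqrtVec hp, Real.sqrt_mul_self (hp _), hp₁]
  rwa [real_inner_self_eq_norm_sq, pow_eq_one_iff_of_nonneg (norm_nonneg _) two_ne_zero] at h

lemma arccos_sum_sqrt_mul_le {p q r : ι → ℝ}
    (hp : ∀ i, 0 ≤ p i) (hp₁ : ∑ i, p i = 1) (hq : ∀ i, 0 ≤ q i) (hq₁ : ∑ i, q i = 1)
    (hr : ∀ i, 0 ≤ r i) (hr₁ : ∑ i, r i = 1) :
    Real.arccos (∑ i, √(p i * r i)) ≤
      Real.arccos (∑ i, √(p i * q i)) + Real.arccos (∑ i, √(q i * r i)) := by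
  have h := InnerProductGeometry.angle_le_angle_add_angle (sqrtVec p) (sqrtVec q) (sqrtVec r)
  simpa only [InnerProductGeometry.angle, inner_sqrtVec hp, inner_sqrtVec hq,
    norm_sqrtVec hp hp₁, norm_sqrtVec hq hq₁, norm_sqrtVec hr hr₁, mul_one, div_one] using h

end Bhattacharyya

lemma sum_cost_trans_le {ι X : Type*} [Fintype ι] {c : X → X → ℝ}
    (hc_tri : ∀ x y z, c x z ≤ c x y + c y z) (x y z : ι → X) (σ τ : Equiv.Perm ι) :
    ∑ i, c (x i) (y (σ.trans τ i)) ≤ ∑ i, c (x i) (z (σ i)) + ∑ i, c (z i) (y (τ i)) := by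
  rw [← Equiv.sum_comp σ fun j => c (z j) (y (τ j)), ← Finset.sum_add_distrib]
  exact Finset.sum_le_sum fun i _ => hc_tri _ _ _

section Matching

variable {X : Type*} (c : X → X → ℝ) {k : ℕ}

noncomputable def matchingCost (x : Fin k → X) (w₁ : Fin k → ℝ) (y : Fin k → X)
    (w₂ : Fin k → ℝ) (σ : Equiv.Perm (Fin k)) : ℝ :=
  (1 / (k : ℝ)) * ∑ i, c (x i) (y (σ i)) + Real.arccos (∑ i, √(w₁ i * w₂ (σ i)))

variable (x y z : Fin k → X) (w₁ w₂ w₃ : Fin k → ℝ)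

lemma dU_le_matchingCost (σ : Equiv.Perm (Fin k)) :
    dU c x w₁ y w₂ ≤ matchingCost c x w₁ y w₂ σ :=
  Finset.inf'_le _ (Finset.mem_univ σ)

lemma exists_dU_eq_matchingCost : ∃ σ, dU c x w₁ y w₂ = matchingCost c x w₁ y w₂ σ := by
  obtain ⟨σ, -, h⟩ := Finset.exists_mem_eq_inf' Finset.univ_nonempty (matchingCost c x w₁ y w₂)
  exact ⟨σ, h⟩

variable {c w₁ w₂ w₃}

lemma matchingCost_trans_le (hc_tri : ∀ x y z, c x z ≤ c x y + c y z)
    (hw₁ : ∀ i, 0 ≤ w₁ i) (hw₁s : ∑ i, w₁ i = 1) (hw₂ : ∀ i, 0 ≤ w₂ i) (hw₂s : ∑ i, w₂ i = 1)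
    (hw₃ : ∀ i, 0 ≤ w₃ i) (hw₃s : ∑ i, w₃ i = 1) (σ τ : Equiv.Perm (Fin k)) :
    matchingCost c x w₁ y w₂ (σ.trans τ) ≤
      matchingCost c x w₁ z w₃ σ + matchingCost c z w₃ y w₂ τ := by
  have hcost := mul_le_mul_of_nonneg_left (sum_cost_trans_le hc_tri x y z σ τ)
    (by positivity : (0 : ℝ) ≤ 1 / (k : ℝ))
  have hangle : Real.arccos (∑ i, √(w₁ i * w₂ (τ (σ i)))) ≤
      Real.arccos (∑ i, √(w₁ i * w₃ (σ i))) + Real.arccos (∑ i, √(w₃ i * w₂ (τ i))) := by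
    rw [← Equiv.sum_comp σ fun j => √(w₃ j * w₂ (τ j))]
    exact arccos_sum_sqrt_mul_le hw₁ hw₁s (fun i => hw₃ (σ i)) ((Equiv.sum_comp σ w₃).trans hw₃s)
      (fun i => hw₂ _) ((Equiv.sum_comp (σ.trans τ) w₂).trans hw₂s)
  simp only [matchingCost, Equiv.trans_apply, mul_add] at hcost ⊢
  linarith

end Matching

theorem dU_triangle_general {X : Type*} (c : X → X → ℝ)
    (hc_tri : ∀ x y z, c x z ≤ c x y + c y z)
    (k : ℕ)
    (x y z : Fin k → X) (w₁ w₂ w₃ : Fin k → ℝ)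
    (hw₁ : ∀ i, 0 ≤ w₁ i) (hw₁s : ∑ i, w₁ i = 1)
    (hw₂ : ∀ i, 0 ≤ w₂ i) (hw₂s : ∑ i, w₂ i = 1)
    (hw₃ : ∀ i, 0 ≤ w₃ i) (hw₃s : ∑ i, w₃ i = 1) :
    dU c x w₁ y w₂ ≤ dU c x w₁ z w₃ + dU c z w₃ y w₂ := by
  obtain ⟨σ, hσ⟩ := exists_dU_eq_matchingCost c x z w₁ w₃
  obtain ⟨τ, hτ⟩ := exists_dU_eq_matchingCost c z y w₃ w₂
  rw [hσ, hτ]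
  exact (dU_le_matchingCost c x y w₁ w₂ (σ.trans τ)).trans
    (matchingCost_trans_le x y z hc_tri hw₁ hw₁s hw₂ hw₂s hw₃ hw₃s σ τ)

/-- **Triangle inequality for the approximate Wasserstein distance** (Theorem 1,
triangle-inequality part): if the cost `c` is nonnegative, vanishes on the diagonal,
is symmetric, and satisfies the triangle inequality, then the induced discrepancy
`d_U` on weighted `k`-tuples satisfies the triangle inequality. -/
theorem dU_triangle {X : Type*} (c : X → X → ℝ)
    (hc_nonneg : ∀ x y, 0 ≤ c x y) (hc_self : ∀ x, c x x = 0)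
    (hc_symm : ∀ x y, c x y = c y x)
    (hc_tri : ∀ x y z, c x z ≤ c x y + c y z)
    (k : ℕ) (hk : 1 ≤ k)
    (x y z : Fin k → X) (w₁ w₂ w₃ : Fin k → ℝ)
    (hw₁ : ∀ i, 0 ≤ w₁ i) (hw₁s : ∑ i, w₁ i = 1)
    (hw₂ : ∀ i, 0 ≤ w₂ i) (hw₂s : ∑ i, w₂ i = 1)
    (hw₃ : ∀ i, 0 ≤ w₃ i) (hw₃s : ∑ i, w₃ i = 1) :
    dU c x w₁ y w₂ ≤ dU c x w₁ z w₃ + dU c z w₃ y w₂ :=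
  dU_triangle_general c hc_tri k x y z w₁ w₂ w₃ hw₁ hw₁s hw₂ hw₂s hw₃ hw₃s
end

section
/- Let m ≥ 1 be an integer and t, v, s real numbers with t > 0, v > 0 and s > m/2. Then ∫_0^∞ [ (2/τ)^{m/2} · t^{m/2 − 1} · exp(−2t/τ) / Γ(m/2) ] · [ (2v)^{s − m/2} / Γ(s − m/2) ] · τ^{m/2 − s − 1} · exp(−2v/τ) dτ = Γ(s) · t^{m/2 − 1} / ( Γ(s − m/2) · Γ(m/2) · v^{m/2} · (1 + t/v)^s ). -/
/-!
For fixed `τ` the integrand is a Gamma density in `t` times an inverse-Gamma kernel in `τ`; the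
exponentials combine, so the product is a constant times `τ ^ (-s - 1) * exp (-(2 (t + v) / τ))`.
This is an unnormalised inverse-Gamma density, with integral `Γ(s) / (2 (t + v)) ^ s`, and the
resulting powers of `2`, `v` and `t + v` simplify to `v ^ (m/2) (1 + t / v) ^ s`.
-/

open MeasureTheory Set Real

-- Substitute `τ = x⁻¹` in the Gamma integral.
theorem integral_rpow_neg_sub_one_mul_exp_neg_div_Ioi {a s : ℝ} (ha : 0 < a) (hs : 0 < s) :
    ∫ τ in Ioi (0 : ℝ), τ ^ (-s - 1) * exp (-(a / τ)) = Gamma s / a ^ s := by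
  have hsubst := integral_comp_rpow_Ioi (fun x ↦ x ^ (s - 1) * exp (-(a * x))) (p := -1)
    (by norm_num)
  rw [integral_rpow_mul_exp_neg_mul_Ioi hs ha, div_rpow zero_le_one ha.le, one_rpow] at hsubst
  rw [div_eq_inv_mul, ← one_div, ← hsubst]
  refine setIntegral_congr_fun measurableSet_Ioi fun τ (hτ : 0 < τ) ↦ ?_
  simp only [smul_eq_mul, abs_neg, abs_one, one_mul]
  rw [← rpow_mul hτ.le, ← mul_assoc, ← rpow_add hτ, rpow_neg_one, ← div_eq_mul_inv]
  ring_nf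

theorem gamma_mul_invGamma_kernel_eq {α s t v τ : ℝ} (hτ : 0 < τ) :
    (2 / τ) ^ α * t ^ (α - 1) * exp (-(2 * t / τ)) / Gamma α *
        ((2 * v) ^ (s - α) / Gamma (s - α)) * τ ^ (α - s - 1) * exp (-(2 * v / τ)) =
      2 ^ α * t ^ (α - 1) * (2 * v) ^ (s - α) / (Gamma α * Gamma (s - α)) *
        (τ ^ (-s - 1) * exp (-(2 * (t + v) / τ))) := by
  have hτα : τ ^ α ≠ 0 := (rpow_pos_of_pos hτ α).ne'
  rw [div_rpow zero_le_two hτ.le, show α - s - 1 = α + (-s - 1) by ring, rpow_add hτ,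
    mul_add, add_div, neg_add, exp_add]
  field_simp

theorem two_rpow_mul_rpow_div_rpow_eq {α s t v : ℝ} (ht : 0 ≤ t) (hv : 0 < v) :
    2 ^ α * (2 * v) ^ (s - α) / (2 * (t + v)) ^ s = (v ^ α * (1 + t / v) ^ s)⁻¹ := by
  have htv : 0 < t + v := by linarith
  rw [mul_rpow zero_le_two hv.le, mul_rpow zero_le_two htv.le, one_add_div hv.ne',
    add_comm v t, div_rpow htv.le hv.le, rpow_sub hv, rpow_sub zero_lt_two]
  have := (rpow_pos_of_pos hv α).ne'
  have := (rpow_pos_of_pos zero_lt_two α).ne'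
  field_simp

theorem integral_gamma_mul_invGamma_kernel {α s t v : ℝ} (hs : 0 < s) (ht : 0 ≤ t)
    (hv : 0 < v) :
    ∫ τ in Ioi (0 : ℝ),
        (2 / τ) ^ α * t ^ (α - 1) * exp (-(2 * t / τ)) / Gamma α *
          ((2 * v) ^ (s - α) / Gamma (s - α)) * τ ^ (α - s - 1) * exp (-(2 * v / τ)) =
      Gamma s * t ^ (α - 1) / (Gamma (s - α) * Gamma α * v ^ α * (1 + t / v) ^ s) := by
  rw [setIntegral_congr_fun measurableSet_Ioi fun τ hτ ↦ gamma_mul_invGamma_kernel_eq hτ,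
    integral_const_mul, integral_rpow_neg_sub_one_mul_exp_neg_div_Ioi (by positivity) hs]
  calc _ = Gamma s * t ^ (α - 1) / (Gamma (s - α) * Gamma α) *
        (2 ^ α * (2 * v) ^ (s - α) / (2 * (t + v)) ^ s) := by ring
    _ = _ := by rw [two_rpow_mul_rpow_div_rpow_eq ht hv]; ring

theorem pearsonVII_mixing_integral_general (m : ℕ) (t v s : ℝ)
    (ht : 0 < t) (hv : 0 < v) (hs : (m : ℝ) / 2 < s) :
    ∫ τ in Set.Ioi (0 : ℝ),
        ((2 / τ) ^ ((m : ℝ) / 2) * t ^ ((m : ℝ) / 2 - 1) * Real.exp (-(2 * t / τ)) /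
            Real.Gamma ((m : ℝ) / 2)) *
          ((2 * v) ^ (s - (m : ℝ) / 2) / Real.Gamma (s - (m : ℝ) / 2)) *
          τ ^ ((m : ℝ) / 2 - s - 1) * Real.exp (-(2 * v / τ)) =
      Real.Gamma s * t ^ ((m : ℝ) / 2 - 1) /
        (Real.Gamma (s - (m : ℝ) / 2) * Real.Gamma ((m : ℝ) / 2) * v ^ ((m : ℝ) / 2) *
          (1 + t / v) ^ s) :=
  integral_gamma_mul_invGamma_kernel ((by positivity : (0 : ℝ) ≤ (m : ℝ) / 2).trans_lt hs)
    ht.le hv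

/-- **The Gamma / inverse-Gamma mixing integral** (appendix of the paper): for
`t > 0`, `v > 0`, `s > m/2`,
`∫₀^∞ [(2/τ)^{m/2} t^{m/2−1} exp(−2t/τ)/Γ(m/2)] · [(2v)^{s−m/2}/Γ(s−m/2)] ·
τ^{m/2−s−1} exp(−2v/τ) dτ = Γ(s) t^{m/2−1} / (Γ(s−m/2) Γ(m/2) v^{m/2} (1+t/v)^s)`. -/
theorem pearsonVII_mixing_integral (m : ℕ) (hm : 1 ≤ m) (t v s : ℝ)
    (ht : 0 < t) (hv : 0 < v) (hs : (m : ℝ) / 2 < s) :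
    ∫ τ in Set.Ioi (0 : ℝ),
        ((2 / τ) ^ ((m : ℝ) / 2) * t ^ ((m : ℝ) / 2 - 1) * Real.exp (-(2 * t / τ)) /
            Real.Gamma ((m : ℝ) / 2)) *
          ((2 * v) ^ (s - (m : ℝ) / 2) / Real.Gamma (s - (m : ℝ) / 2)) *
          τ ^ ((m : ℝ) / 2 - s - 1) * Real.exp (-(2 * v / τ)) =
      Real.Gamma s * t ^ ((m : ℝ) / 2 - 1) /
        (Real.Gamma (s - (m : ℝ) / 2) * Real.Gamma ((m : ℝ) / 2) * v ^ ((m : ℝ) / 2) *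
          (1 + t / v) ^ s) :=
  pearsonVII_mixing_integral_general m t v s ht hv hs
end

section
/- Let m ≥ 1 be an integer and v, s real numbers with v > 0 and s > m/2. Let G and K be independent positive real random variables such that G has the Gamma distribution with shape m/2 and rate 2, and K⁻¹ has the Gamma distribution with shape s − m/2 and rate 2v. Then the product K · G is absolutely continuous with density t ↦ ( Γ(s) / ( Γ(s − m/2) · Γ(m/2) · v^{m/2} ) ) · t^{m/2 − 1} · (1 + t/v)^{−s} on (0, ∞). -/
open MeasureTheory
open scoped ENNReal

/-!
Since `K · G = G / K⁻¹`, the law of `K · G` is the law of the ratio of two independent Gamma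
variables. Conditioning on the denominator `y > 0`, the ratio has density
`t ↦ y · f(y t)`, `f` the Gamma density of `G`; integrating this against the Gamma law of `K⁻¹` turns the integrand into a
multiple of a Gamma density in `y` with shape `s` and rate `2 t + 2 v`, whose total mass is one,
leaving the Pearson type VII density.
-/

open Real Set ProbabilityTheory

lemma measurable_gammaPDF (a r : ℝ) : Measurable (gammaPDF a r) :=
  (measurable_gammaPDFReal a r).ennreal_ofReal

lemma lintegral_eq_ofReal_mul_lintegral_comp_mul_left {y : ℝ} (hy : 0 < y) {h : ℝ → ℝ≥0∞}
    (hh : Measurable h) : ∫⁻ x, h x = ENNReal.ofReal y * ∫⁻ t, h (y * t) := by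
  rw [← lintegral_map hh (measurable_const_mul y), Real.map_volume_mul_left hy.ne',
    lintegral_smul_measure, smul_eq_mul, ← mul_assoc, abs_of_pos (inv_pos.mpr hy),
    ← ENNReal.ofReal_mul hy.le, mul_inv_cancel₀ hy.ne', ENNReal.ofReal_one, one_mul]

lemma map_div_const_withDensity {f : ℝ → ℝ≥0∞} (hf : Measurable f) {y : ℝ} (hy : 0 < y) :
    (volume.withDensity f).map (· / y) =
      volume.withDensity (fun t => ENNReal.ofReal y * f (y * t)) := by
  ext S hS
  have hS' : MeasurableSet ((· / y) ⁻¹' S) := measurable_div_const y hS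
  rw [Measure.map_apply (measurable_div_const y) hS, withDensity_apply _ hS',
    withDensity_apply _ hS, ← lintegral_indicator hS',
    lintegral_eq_ofReal_mul_lintegral_comp_mul_left hy (hf.indicator hS'),
    ← lintegral_const_mul' _ _ ENNReal.ofReal_ne_top, ← lintegral_indicator hS]
  congr 1 with t
  by_cases ht : t ∈ S <;> simp [mul_div_cancel_left₀ _ hy.ne', ht]

lemma map_div_prod_withDensity {f : ℝ → ℝ≥0∞} (hf : Measurable f) (ν : Measure ℝ) [SFinite ν]
    (hν : ∀ᵐ y ∂ν, 0 < y) :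
    ((volume.withDensity f).prod ν).map (fun p : ℝ × ℝ => p.1 / p.2) =
      volume.withDensity (fun t => ∫⁻ y, ENNReal.ofReal y * f (y * t) ∂ν) := by
  have hq : Measurable fun p : ℝ × ℝ => p.1 / p.2 := measurable_fst.div measurable_snd
  ext S hS
  rw [Measure.map_apply hq hS, Measure.prod_apply_symm (hq hS), withDensity_apply _ hS]
  calc ∫⁻ y, volume.withDensity f ((fun x => (x, y)) ⁻¹' ((fun p : ℝ × ℝ => p.1 / p.2) ⁻¹' S)) ∂ν
      = ∫⁻ y, (∫⁻ t in S, ENNReal.ofReal y * f (y * t)) ∂ν := by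
        refine lintegral_congr_ae (hν.mono fun y hy => ?_)
        dsimp only
        rw [← withDensity_apply _ hS, ← map_div_const_withDensity hf hy,
          Measure.map_apply (measurable_div_const y) hS]
        rfl
    _ = ∫⁻ t in S, ∫⁻ y, ENNReal.ofReal y * f (y * t) ∂ν :=
        lintegral_lintegral_swap (((ENNReal.measurable_ofReal.comp measurable_fst).mul
          (hf.comp (measurable_fst.mul measurable_snd))).aemeasurable)

lemma ae_pos_gammaMeasure (a r : ℝ) : ∀ᵐ y ∂gammaMeasure a r, 0 < y := by
  rw [gammaMeasure, ae_withDensity_iff (measurable_gammaPDF a r)]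
  filter_upwards [Measure.ae_ne volume 0] with y hy hpdf
  exact hy.lt_or_gt.resolve_left fun hneg => hpdf (gammaPDF_of_neg hneg)

lemma gammaPDF_mul_ofReal_mul_gammaPDF_mul {a b ra rb t y : ℝ} (ha : 0 < a) (hb : 0 < b)
    (hra : 0 < ra) (hrb : 0 < rb) (ht : 0 < t) (hy : y ≠ 0) :
    gammaPDF b rb y * (ENNReal.ofReal y * gammaPDF a ra (y * t)) =
      ENNReal.ofReal (ra ^ a * rb ^ b * Gamma (a + b) / (Gamma a * Gamma b) * t ^ (a - 1)
          / (ra * t + rb) ^ (a + b)) * gammaPDF (a + b) (ra * t + rb) y := by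
  rcases hy.lt_or_gt with hy | hy
  · rw [gammaPDF_of_neg hy, gammaPDF_of_neg hy, zero_mul, mul_zero]
  have hΓa := Gamma_pos_of_pos ha
  have hΓb := Gamma_pos_of_pos hb
  rw [gammaPDF_of_nonneg hy.le, gammaPDF_of_nonneg (mul_pos hy ht).le,
    gammaPDF_of_nonneg hy.le, ← ENNReal.ofReal_mul (by positivity),
    ← ENNReal.ofReal_mul (by positivity), ← ENNReal.ofReal_mul (by positivity)]
  congr 1
  have hexp : exp (-(rb * y)) * exp (-(ra * (y * t))) = exp (-((ra * t + rb) * y)) := by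
    rw [← exp_add]; ring_nf
  have hpow : y ^ (b - 1) * y * y ^ (a - 1) = y ^ (a + b - 1) := by
    rw [show a + b - 1 = (b - 1) + 1 + (a - 1) by ring, rpow_add hy, rpow_add hy, rpow_one]
  have hR : (ra * t + rb) ^ (a + b) ≠ 0 := (rpow_pos_of_pos (by positivity) _).ne'
  rw [mul_rpow hy.le ht.le, ← hexp, ← hpow]
  field_simp

lemma lintegral_ofReal_mul_gammaPDF_mul_gammaMeasure {a b ra rb t : ℝ} (ha : 0 < a)
    (hb : 0 < b) (hra : 0 < ra) (hrb : 0 < rb) (ht : 0 < t) :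
    ∫⁻ y, ENNReal.ofReal y * gammaPDF a ra (y * t) ∂gammaMeasure b rb =
      ENNReal.ofReal (ra ^ a * rb ^ b * Gamma (a + b) / (Gamma a * Gamma b) * t ^ (a - 1)
          / (ra * t + rb) ^ (a + b)) := by
  rw [gammaMeasure, lintegral_withDensity_eq_lintegral_mul _ (measurable_gammaPDF b rb)
      (g := fun y => ENNReal.ofReal y * gammaPDF a ra (y * t))
      (ENNReal.measurable_ofReal.mul ((measurable_gammaPDF a ra).comp (measurable_mul_const t))),
    Pi.mul_def, lintegral_congr_ae ((Measure.ae_ne volume 0).mono fun y hy =>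
      gammaPDF_mul_ofReal_mul_gammaPDF_mul ha hb hra hrb ht hy),
    lintegral_const_mul _ (measurable_gammaPDF _ _),
    lintegral_gammaPDF_eq_one (add_pos ha hb) (by positivity), mul_one]

/-- The ratio of independent Gamma variables follows a (generalized) beta prime law. -/
theorem gammaMeasure_prod_map_div {a b ra rb : ℝ} (ha : 0 < a) (hb : 0 < b) (hra : 0 < ra)
    (hrb : 0 < rb) :
    ((gammaMeasure a ra).prod (gammaMeasure b rb)).map (fun p : ℝ × ℝ => p.1 / p.2) =
      volume.withDensity (fun t => ENNReal.ofReal (if 0 < t then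
        ra ^ a * rb ^ b * Gamma (a + b) / (Gamma a * Gamma b) * t ^ (a - 1)
          / (ra * t + rb) ^ (a + b) else 0)) := by
  have := isProbabilityMeasure_gammaMeasure hb hrb
  rw [show gammaMeasure a ra = volume.withDensity (gammaPDF a ra) from rfl,
    map_div_prod_withDensity (measurable_gammaPDF a ra) _ (ae_pos_gammaMeasure b rb)]
  refine withDensity_congr_ae ((Measure.ae_ne volume 0).mono fun t ht => ?_)
  dsimp only
  rcases ht.lt_or_gt with ht | ht
  · rw [if_neg ht.not_gt, ENNReal.ofReal_zero]
    refine (lintegral_congr_ae ((ae_pos_gammaMeasure b rb).mono fun y hy => ?_)).trans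
      lintegral_zero
    rw [gammaPDF_of_neg (mul_neg_of_pos_of_neg hy ht), mul_zero]
  · rw [if_pos ht, lintegral_ofReal_mul_gammaPDF_mul_gammaMeasure ha hb hra hrb ht]

lemma gammaRatio_density_eq_pearsonVII {α s v t : ℝ} (hα : 0 < α) (hs : α < s) (hv : 0 < v)
    (ht : 0 < t) :
    2 ^ α * (2 * v) ^ (s - α) * Gamma (α + (s - α)) / (Gamma α * Gamma (s - α)) *
        t ^ (α - 1) / (2 * t + 2 * v) ^ (α + (s - α)) =
      Gamma s / (Gamma (s - α) * Gamma α * v ^ α) * t ^ (α - 1) * (1 + t / v) ^ (-s) := by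
  have hΓα := Gamma_pos_of_pos hα
  have hΓs := Gamma_pos_of_pos (sub_pos.mpr hs)
  have htv : 0 < t + v := by positivity
  have h2 : (2 : ℝ) ^ α * 2 ^ (s - α) = 2 ^ s := by rw [← rpow_add two_pos]; ring_nf
  have hvs : v ^ α * v ^ (s - α) = v ^ s := by rw [← rpow_add hv]; ring_nf
  have hdenom : (2 * t + 2 * v) ^ s = 2 ^ s * (t + v) ^ s := by
    rw [← mul_rpow zero_le_two htv.le]; ring_nf
  have hpow : (1 + t / v) ^ (-s) = v ^ s / (t + v) ^ s := by
    rw [show 1 + t / v = (t + v) / v by field_simp; ring, rpow_neg (by positivity),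
      div_rpow htv.le hv.le, inv_div]
  have : (0 : ℝ) < (t + v) ^ s := rpow_pos_of_pos htv s
  have : (0 : ℝ) < v ^ α := rpow_pos_of_pos hv α
  have : (0 : ℝ) < 2 ^ s := rpow_pos_of_pos two_pos s
  rw [add_sub_cancel, hdenom, hpow, mul_rpow zero_le_two hv.le, ← h2, ← hvs]
  field_simp

theorem pearsonVII_radial_density_general
    {Ω : Type*} [MeasurableSpace Ω] (P : Measure Ω) [IsProbabilityMeasure P]
    (m : ℕ) (hm : 1 ≤ m) (v s : ℝ) (hv : 0 < v) (hs : (m : ℝ) / 2 < s)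
    (G K : Ω → ℝ) (hG : Measurable G) (hK : Measurable K)
    (hindep : ProbabilityTheory.IndepFun G K P)
    (hGlaw : P.map G = ProbabilityTheory.gammaMeasure ((m : ℝ) / 2) 2)
    (hKlaw : P.map (fun ω => (K ω)⁻¹) =
      ProbabilityTheory.gammaMeasure (s - (m : ℝ) / 2) (2 * v)) :
    P.map (fun ω => K ω * G ω) =
      volume.withDensity (fun t : ℝ =>
        ENNReal.ofReal (if 0 < t then
          Real.Gamma s / (Real.Gamma (s - (m : ℝ) / 2) * Real.Gamma ((m : ℝ) / 2) *
              v ^ ((m : ℝ) / 2)) *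
            t ^ ((m : ℝ) / 2 - 1) * (1 + t / v) ^ (-s)
        else 0)) := by
  have hα : 0 < (m : ℝ) / 2 := by
    have : (0 : ℝ) < m := by exact_mod_cast hm
    positivity
  have hKinv : Measurable fun ω => (K ω)⁻¹ := hK.inv
  have hpair : P.map (fun ω => (G ω, (K ω)⁻¹)) =
      (gammaMeasure ((m : ℝ) / 2) 2).prod (gammaMeasure (s - (m : ℝ) / 2) (2 * v)) := by
    rw [(indepFun_iff_map_prod_eq_prod_map_map hG.aemeasurable hKinv.aemeasurable).mp
      (hindep.comp measurable_id measurable_inv), hGlaw, hKlaw]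
  have hKG : (fun ω => K ω * G ω) = (fun p : ℝ × ℝ => p.1 / p.2) ∘ fun ω => (G ω, (K ω)⁻¹) := by
    funext ω
    simp [div_eq_mul_inv, mul_comm]
  have hdiv : Measurable fun p : ℝ × ℝ => p.1 / p.2 := measurable_fst.div measurable_snd
  rw [hKG, ← Measure.map_map hdiv (hG.prodMk hKinv), hpair,
    gammaMeasure_prod_map_div hα (sub_pos.mpr hs) two_pos (by positivity)]
  congr 1 with t
  split_ifs with ht
  · rw [gammaRatio_density_eq_pearsonVII hα hs hv ht]
  · rfl

/-- **Pearson type VII stochastic representation (Table 1 of the paper)**: if `G` and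
`K` are independent positive random variables with `G ∼ Gamma(m/2, 2)` and
`K⁻¹ ∼ Gamma(s − m/2, 2v)`, then `K · G` is absolutely continuous with density
`t ↦ (Γ(s)/(Γ(s−m/2) Γ(m/2) v^{m/2})) · t^{m/2−1} (1 + t/v)^{−s}` on `(0,∞)`. -/
theorem pearsonVII_radial_density
    {Ω : Type*} [MeasurableSpace Ω] (P : Measure Ω) [IsProbabilityMeasure P]
    (m : ℕ) (hm : 1 ≤ m) (v s : ℝ) (hv : 0 < v) (hs : (m : ℝ) / 2 < s)
    (G K : Ω → ℝ) (hG : Measurable G) (hK : Measurable K)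
    (hGpos : ∀ ω, 0 < G ω) (hKpos : ∀ ω, 0 < K ω)
    (hindep : ProbabilityTheory.IndepFun G K P)
    (hGlaw : P.map G = ProbabilityTheory.gammaMeasure ((m : ℝ) / 2) 2)
    (hKlaw : P.map (fun ω => (K ω)⁻¹) =
      ProbabilityTheory.gammaMeasure (s - (m : ℝ) / 2) (2 * v)) :
    P.map (fun ω => K ω * G ω) =
      volume.withDensity (fun t : ℝ =>
        ENNReal.ofReal (if 0 < t then
          Real.Gamma s / (Real.Gamma (s - (m : ℝ) / 2) * Real.Gamma ((m : ℝ) / 2) *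
              v ^ ((m : ℝ) / 2)) *
            t ^ ((m : ℝ) / 2 - 1) * (1 + t / v) ^ (-s)
        else 0)) :=
  pearsonVII_radial_density_general P m hm v s hv hs G K hG hK hindep hGlaw hKlaw
end
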